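/- arXiv:2306.07360 — 2 statements merged into one kernel-verified Lean document; each statement's English description precedes it below -/
import Mathlib

section
/- Let L be a complete modular lattice and 𝔪 a submonoid with zero of End_lin(L) that is closed under complements, and suppose L is 𝔪-endoregular. Let ε ∈ 𝔪 be idempotent (ε ∘ ε = ε), so that ker_ε has ε(⊤) as a complement, and let π_{ker_ε}(a) = (a ⊔ ε(⊤)) ⊓ ker_ε be the projection onto ker_ε. Then ε is central in 𝔪 (ε ∘ φ = φ ∘ ε for all φ ∈ 𝔪) if and only if π_{ker_ε} ∘ φ ∘ ε = 0 for all φ ∈ 𝔪. -/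
section Preamble

variable {α β : Type*}

/-- A linear morphism between complete lattices: there is a kernel element `k` such that
`φ x = φ (x ⊔ k)` for all `x`, and `φ` restricts to an isomorphism of (complete) lattices
from the interval `[k, ⊤]` onto `[⊥, φ ⊤]`. -/
def IsLinMor [CompleteLattice α] [CompleteLattice β] (φ : α → β) : Prop :=
  ∃ k : α, (∀ x, φ x = φ (x ⊔ k)) ∧
    ∃ e : Set.Icc k (⊤ : α) ≃o Set.Icc (⊥ : β) (φ ⊤),
      ∀ x : Set.Icc k (⊤ : α), (e x : β) = φ (x : α)

/-- The kernel of a linear morphism: the largest element sent to `⊥`. -/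
noncomputable def linKer [CompleteLattice α] [CompleteLattice β] (φ : α → β) : α :=
  sSup {a | φ a = ⊥}

/-- A submonoid with zero of the monoid of linear endomorphisms of `α`. -/
structure IsLinSubmonoid [CompleteLattice α] (M : Set (α → α)) : Prop where
  lin_mem : ∀ φ ∈ M, IsLinMor φ
  id_mem : (id : α → α) ∈ M
  zero_mem : (fun _ : α => (⊥ : α)) ∈ M
  comp_mem : ∀ φ ∈ M, ∀ ψ ∈ M, φ ∘ ψ ∈ M

/-- The projection onto `x` along a complement `x'`. -/
def proj [CompleteLattice α] (x x' : α) : α → α := fun a => (a ⊔ x') ⊓ x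

/-- `M` is closed under complements: whenever `φ ∈ M` restricts to a linear isomorphism
`[⊥, x] → [⊥, y]` with `x, y` complemented, the composite `ι_x ∘ (φ|_x)⁻¹ ∘ π_y` is in `M`. -/
def ClosedUnderComplements [CompleteLattice α] (M : Set (α → α)) : Prop :=
  ∀ φ ∈ M, ∀ x x' y y' : α, IsCompl x x' → IsCompl y y' →
    ∀ e : Set.Icc (⊥ : α) x ≃o Set.Icc (⊥ : α) y,
      (∀ a : Set.Icc (⊥ : α) x, ((e a : Set.Icc (⊥ : α) y) : α) = φ (a : α)) →
      (fun a : α =>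
        ((e.symm ⟨(a ⊔ y') ⊓ y, bot_le, inf_le_right⟩ : Set.Icc (⊥ : α) x) : α)) ∈ M

/-- `L` is `M`-endoregular: `M` is a regular monoid. -/
def MEndoregular [CompleteLattice α] (M : Set (α → α)) : Prop :=
  ∀ φ ∈ M, ∃ ψ ∈ M, φ ∘ ψ ∘ φ = φ

/-- `L` is `M`-Rickart: kernels of members of `M` have complements. -/
def MRickart [CompleteLattice α] (M : Set (α → α)) : Prop :=
  ∀ φ ∈ M, ∃ y, IsCompl (linKer φ) y

/-- `L` is dual-`M`-Rickart: images of members of `M` have complements. -/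
def MDualRickart [CompleteLattice α] (M : Set (α → α)) : Prop :=
  ∀ φ ∈ M, ∃ y, IsCompl (φ ⊤) y

/-- The `M`-C2 condition. -/
def MC2 [CompleteLattice α] (M : Set (α → α)) : Prop :=
  ∀ a x x' : α, IsCompl x x' →
    ∀ e : Set.Icc (⊥ : α) x ≃o Set.Icc (⊥ : α) a,
      ((fun b : α =>
          ((e ⟨(b ⊔ x') ⊓ x, bot_le, inf_le_right⟩ : Set.Icc (⊥ : α) a) : α)) ∈ M) →
      ∃ a', IsCompl a a'

/-- The `M`-D2 condition. -/
def MD2 [CompleteLattice α] (M : Set (α → α)) : Prop :=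
  ∀ a x : α, (∃ x', IsCompl x x') →
    ∀ e : Set.Icc a (⊤ : α) ≃o Set.Icc (⊥ : α) x,
      ((fun b : α => ((e ⟨a ⊔ b, le_sup_left, le_top⟩ : Set.Icc (⊥ : α) x) : α)) ∈ M) →
      ∃ a', IsCompl a a'

/-- `L` is `M`-abelian: every idempotent of `M` is central in `M`. -/
def MAbelian [CompleteLattice α] (M : Set (α → α)) : Prop :=
  ∀ ε ∈ M, ε ∘ ε = ε → ∀ φ ∈ M, ε ∘ φ = φ ∘ ε

/-- `a` is `M`-`L`-generated: it is a join of images of linear morphisms `L → [⊥, a]`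
whose composites with the inclusion `ι_a` lie in `M`. -/
def MGenerated [CompleteLattice α] (M : Set (α → α)) (a : α) : Prop :=
  ∃ S : Set (α → α), S ⊆ M ∧ (∀ f ∈ S, ∀ x, f x ≤ a) ∧ (⨆ f ∈ S, f ⊤) = a

/-- A complete lattice is compact if every join representation of `⊤` has a finite subjoin. -/
def CompactLat (α : Type*) [CompleteLattice α] : Prop :=
  ∀ s : Set α, sSup s = ⊤ → ∃ t : Finset α, ↑t ⊆ s ∧ sSup (↑t : Set α) = ⊤

/-- An element `c` is compact if the interval `[⊥, c]` is a compact lattice. -/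
def CompactElt [CompleteLattice α] (c : α) : Prop :=
  ∀ s : Set α, (∀ a ∈ s, a ≤ c) → sSup s = c →
    ∃ t : Finset α, ↑t ⊆ s ∧ sSup (↑t : Set α) = c

/-- `x` is essential in `L`. -/
def Essential [CompleteLattice α] (x : α) : Prop := ∀ y, x ⊓ y = ⊥ → y = ⊥

/-- `x` is essential in the interval `[⊥, c]`. -/
def EssentialIn [CompleteLattice α] (x c : α) : Prop :=
  x ≤ c ∧ ∀ y ≤ c, x ⊓ y = ⊥ → y = ⊥

/-- `x` is superfluous in `L`. -/
def Superfluous [CompleteLattice α] (x : α) : Prop := ∀ y, x ⊔ y = ⊤ → y = ⊤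

/-- `x` is superfluous in the interval `[⊥, c]`. -/
def SuperfluousIn [CompleteLattice α] (x c : α) : Prop :=
  x ≤ c ∧ ∀ y ≤ c, x ⊔ y = c → y = c

/-- `M` contains all the projections. -/
def ContainsProjections [CompleteLattice α] (M : Set (α → α)) : Prop :=
  ∀ x x' : α, IsCompl x x' → proj x x' ∈ M

/-- `L` is `M`-K-extending. -/
def MKExtending [CompleteLattice α] (M : Set (α → α)) : Prop :=
  ∀ φ ∈ M, ∃ c : α, (∃ c', IsCompl c c') ∧ EssentialIn (linKer φ) c

/-- `L` is `M`-K-nonsingular. -/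
def MKNonsingular [CompleteLattice α] (M : Set (α → α)) : Prop :=
  ∀ φ ∈ M, Essential (linKer φ) → φ = fun _ => (⊥ : α)

/-- `L` is `M`-T-lifting. -/
def MTLifting [CompleteLattice α] (M : Set (α → α)) : Prop :=
  ∀ φ ∈ M, ∃ c c' : α, IsCompl c c' ∧ c ≤ φ ⊤ ∧ SuperfluousIn (φ ⊤ ⊓ c') c'

end Preamble

/-
Write K for the kernel of ε. Since K and ε ⊤ are complements, π_K ∘ φ ∘ ε = 0 says that φ maps
ε ⊤ into itself, i.e. φ ∘ ε = ε ∘ φ ∘ ε. Centrality then reduces to the dual identity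
ε ∘ φ ∘ ε = ε ∘ φ, which holds as soon as φ maps K into K. For that, note that π_K ∈ 𝔪 (closure
under complements applied to the identity), so ψ = ε ∘ φ ∘ π_K ∈ 𝔪; by hypothesis
π_K ∘ χ ∘ ε = 0, hence ψ ∘ χ ∘ ψ = 0 for every χ ∈ 𝔪, and regularity forces ψ = 0.
-/

namespace IsLinMor

variable {α β : Type*} [CompleteLattice α] [CompleteLattice β] {φ : α → β}

theorem map_eq_bot_iff_le_of_orderIso {k : α} (hk : ∀ x, φ x = φ (x ⊔ k))
    (e : Set.Icc k (⊤ : α) ≃o Set.Icc (⊥ : β) (φ ⊤)) (he : ∀ x, (e x : β) = φ x) (x : α) :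
    φ x = ⊥ ↔ x ≤ k := by
  have : Fact (k ≤ ⊤) := ⟨le_top⟩
  have : Fact ((⊥ : β) ≤ φ ⊤) := ⟨bot_le⟩
  rw [hk, ← he ⟨x ⊔ k, le_sup_right, le_top⟩]
  change _ = ((⊥ : Set.Icc (⊥ : β) (φ ⊤)) : β) ↔ _
  rw [Subtype.coe_inj, _root_.map_eq_bot_iff, ← Subtype.coe_inj, Set.Icc.coe_bot, sup_eq_right]

theorem exists_orderIso_linKer (h : IsLinMor φ) :
    (∀ x, φ x = φ (x ⊔ linKer φ)) ∧ ∃ e : Set.Icc (linKer φ) (⊤ : α) ≃o Set.Icc (⊥ : β) (φ ⊤),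
      ∀ x, (e x : β) = φ x := by
  obtain ⟨k, hk, e, he⟩ := h
  have hker : linKer φ = k :=
    le_antisymm (sSup_le fun a ha => (map_eq_bot_iff_le_of_orderIso hk e he a).1 ha)
      (le_sSup ((map_eq_bot_iff_le_of_orderIso hk e he k).2 le_rfl))
  subst hker
  exact ⟨hk, e, he⟩

theorem map_eq_bot_iff (h : IsLinMor φ) {x : α} : φ x = ⊥ ↔ x ≤ linKer φ :=
  let ⟨hk, e, he⟩ := h.exists_orderIso_linKer
  map_eq_bot_iff_le_of_orderIso hk e he x

theorem map_bot (h : IsLinMor φ) : φ ⊥ = ⊥ :=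
  h.map_eq_bot_iff.2 bot_le

theorem sup_linKer_eq_of_map_eq (h : IsLinMor φ) {x y : α} (hxy : φ x = φ y) :
    x ⊔ linKer φ = y ⊔ linKer φ := by
  obtain ⟨hk, e, he⟩ := h.exists_orderIso_linKer
  have : e ⟨x ⊔ linKer φ, le_sup_right, le_top⟩ = e ⟨y ⊔ linKer φ, le_sup_right, le_top⟩ := by
    rw [← Subtype.coe_inj, he, he, ← hk, ← hk, hxy]
  exact congrArg Subtype.val (e.injective this)

theorem map_sup (h : IsLinMor φ) (x y : α) : φ (x ⊔ y) = φ x ⊔ φ y := by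
  obtain ⟨hk, e, he⟩ := h.exists_orderIso_linKer
  have hsup := congrArg Subtype.val
    (e.map_sup ⟨x ⊔ linKer φ, le_sup_right, le_top⟩ ⟨y ⊔ linKer φ, le_sup_right, le_top⟩)
  rwa [Set.Icc.coe_sup, he, he, he, Set.Icc.coe_sup, ← hk, ← hk, ← sup_sup_distrib_right,
    ← hk] at hsup

theorem monotone (h : IsLinMor φ) : Monotone φ := fun x y hxy => by
  rw [← sup_eq_right.2 hxy, h.map_sup]
  exact le_sup_left

theorem exists_map_eq_of_le_map_top (h : IsLinMor φ) {y : β} (hy : y ≤ φ ⊤) : ∃ x, φ x = y := by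
  obtain ⟨-, e, he⟩ := h.exists_orderIso_linKer
  exact ⟨e.symm ⟨y, bot_le, hy⟩, by rw [← he, e.apply_symm_apply]⟩

variable {ε : α → α}

theorem map_eq_self_of_le_map_top (h : IsLinMor ε) (hidem : ε ∘ ε = ε) {y : α} (hy : y ≤ ε ⊤) :
    ε y = y := by
  obtain ⟨x, rfl⟩ := h.exists_map_eq_of_le_map_top hy
  exact congrFun hidem x

theorem comp_comp_eq_of_map_linKer_eq_bot (hε : IsLinMor ε) (hidem : ε ∘ ε = ε) {φ : α → α}
    (hφ : IsLinMor φ) (hK : ε (φ (linKer ε)) = ⊥) : ε ∘ φ ∘ ε = ε ∘ φ := by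
  have hsup : ∀ a, ε (φ (a ⊔ linKer ε)) = ε (φ a) := fun a => by
    rw [hφ.map_sup, hε.map_sup, hK, sup_bot_eq]
  funext a
  have hker : ε a ⊔ linKer ε = a ⊔ linKer ε := hε.sup_linKer_eq_of_map_eq (congrFun hidem a)
  simp only [Function.comp_apply]
  rw [← hsup, hker, hsup]

end IsLinMor

section Projection

variable {α : Type*} [CompleteLattice α] {x x' : α}

theorem proj_top : proj x x' ⊤ = x := by
  rw [proj, top_sup_eq, top_inf_eq]

theorem proj_eq_bot_iff [IsModularLattice α] (h : IsCompl x x') {a : α} :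
    proj x x' a = ⊥ ↔ a ≤ x' := by
  constructor
  · intro ha
    have : proj x x' a ⊔ x' = a ⊔ x' := by
      rw [proj, inf_sup_assoc_of_le _ le_sup_right, h.sup_eq_top, inf_top_eq]
    rw [ha, bot_sup_eq] at this
    exact this ▸ le_sup_left
  · intro ha
    rw [proj, sup_eq_right.2 ha, inf_comm, h.inf_eq_bot]

theorem ClosedUnderComplements.proj_mem {M : Set (α → α)} (hcc : ClosedUnderComplements M)
    (hid : id ∈ M) (h : IsCompl x x') : proj x x' ∈ M :=
  hcc id hid x x' x x' h h (OrderIso.refl _) fun _ => rfl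

end Projection

/-- In an `M`-endoregular lattice, an idempotent `ε ∈ M` is central in `M` iff
`π_{ker_ε} ∘ φ ∘ ε = 0` for all `φ ∈ M`, where `π_{ker_ε}` is the projection onto `ker_ε`
along `ε ⊤`. -/
theorem stmt_8 {α : Type*} [CompleteLattice α] [IsModularLattice α]
    (M : Set (α → α)) (hM : IsLinSubmonoid M) (hcc : ClosedUnderComplements M)
    (hreg : MEndoregular M)
    (ε : α → α) (hε : ε ∈ M) (hidem : ε ∘ ε = ε)
    (hcompl : IsCompl (linKer ε) (ε ⊤)) :
    (∀ φ ∈ M, ε ∘ φ = φ ∘ ε) ↔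
      (∀ φ ∈ M, (proj (linKer ε) (ε ⊤)) ∘ φ ∘ ε = fun _ => (⊥ : α)) := by
  have hεlin := hM.lin_mem ε hε
  have hπ_eq_zero_iff : ∀ φ : α → α,
      (proj (linKer ε) (ε ⊤) ∘ φ ∘ ε = fun _ => ⊥) ↔ ∀ a, φ (ε a) ≤ ε ⊤ := fun φ => by
    simp only [funext_iff, Function.comp_apply, proj_eq_bot_iff hcompl]
  simp only [hπ_eq_zero_iff]
  constructor
  · intro hcen φ hφ a
    rw [← Function.comp_apply (f := φ), ← hcen φ hφ]
    exact hεlin.monotone le_top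
  · intro himage φ hφ
    have hφlin := hM.lin_mem φ hφ
    have hπ := hcc.proj_mem hM.id_mem hcompl
    obtain ⟨χ, hχ, hregular⟩ := hreg _ (hM.comp_mem _ hε _ (hM.comp_mem _ hφ _ hπ))
    have hker : ε (φ (linKer ε)) = ⊥ := by
      have h := congrFun hregular ⊤
      simp only [Function.comp_apply, proj_top] at h
      rw [← h, (proj_eq_bot_iff hcompl).2 (himage χ hχ _), hφlin.map_bot, hεlin.map_bot]
    calc ε ∘ φ = ε ∘ φ ∘ ε := (hεlin.comp_comp_eq_of_map_linKer_eq_bot hidem hφlin hker).symm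
      _ = φ ∘ ε := funext fun a => hεlin.map_eq_self_of_le_map_top hidem (himage φ hφ a)
end

section
/- Let L be a complete modular lattice and 𝔪 a submonoid with zero of End_lin(L) that contains all the projections. Then L is 𝔪-Rickart if and only if L is 𝔪-K-extending and 𝔪-K-nonsingular. -/
section LinearMorphism

variable {α β : Type*} [CompleteLattice α] [CompleteLattice β] {φ : α → β}

theorem map_eq_bot_and_linKer_eq_of_iso {k : α} (hk : ∀ x, φ x = φ (x ⊔ k))
    (e : Set.Icc k (⊤ : α) ≃o Set.Icc (⊥ : β) (φ ⊤)) (he : ∀ x, (e x : β) = φ x) :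
    φ k = ⊥ ∧ linKer φ = k := by
  have hk_bot : φ k = ⊥ := by
    have : e ⟨k, le_rfl, le_top⟩ ≤ ⟨⊥, le_rfl, bot_le⟩ := e.le_symm_apply.mp (e.symm _).2.1
    exact (he _).symm.trans (le_bot_iff.mp this)
  refine ⟨hk_bot, le_antisymm (sSup_le fun a ha => ?_) (le_sSup hk_bot)⟩
  have : e ⟨a ⊔ k, le_sup_right, le_top⟩ = e ⟨k, le_rfl, le_top⟩ :=
    Subtype.ext <| by rw [he, he, ← hk, ha, hk_bot]
  exact sup_eq_right.mp (congrArg Subtype.val (e.injective this))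

namespace IsLinMor

theorem map_linKer (h : IsLinMor φ) : φ (linKer φ) = ⊥ := by
  obtain ⟨k, hk, e, he⟩ := h
  obtain ⟨hk_bot, hker⟩ := map_eq_bot_and_linKer_eq_of_iso hk e he
  rwa [hker]

theorem map_sup_linKer (h : IsLinMor φ) (x : α) : φ (x ⊔ linKer φ) = φ x := by
  obtain ⟨k, hk, e, he⟩ := h
  rw [(map_eq_bot_and_linKer_eq_of_iso hk e he).2, ← hk]

theorem eq_bot_of_linKer_eq_top (h : IsLinMor φ) (htop : linKer φ = ⊤) :
    φ = fun _ => ⊥ := by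
  funext x
  rw [← h.map_sup_linKer, htop, sup_top_eq, ← htop, h.map_linKer]

end IsLinMor

end LinearMorphism

section Essential

variable {α : Type*} [CompleteLattice α]

theorem essentialIn_self (x : α) : EssentialIn x x :=
  ⟨le_rfl, fun _ hy hxy => by rwa [inf_eq_right.mpr hy] at hxy⟩

theorem Essential.mono {x y : α} (hx : Essential x) (hxy : x ≤ y) : Essential y :=
  fun z hz => hx z (le_bot_iff.mp (hz ▸ inf_le_inf_right z hxy))

theorem Essential.eq_top_of_isCompl {x y : α} (hx : Essential x) (hxy : IsCompl x y) :
    x = ⊤ := by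
  rw [← hxy.sup_eq_top, hx y hxy.inf_eq_bot, sup_bot_eq]

theorem EssentialIn.essential_sup_of_isCompl [IsModularLattice α] {k c c' : α}
    (hk : EssentialIn k c) (hc : IsCompl c c') : Essential (k ⊔ c') := by
  intro y hy
  have hc'y : (k ⊔ c') ⊓ (c' ⊔ y) = c' := by
    rw [inf_comm, sup_inf_assoc_of_le y le_sup_right, inf_comm y, hy, sup_bot_eq]
  have hz : (c' ⊔ y) ⊓ c = ⊥ := by
    refine hk.2 _ inf_le_right (le_bot_iff.mp ?_)
    calc k ⊓ ((c' ⊔ y) ⊓ c)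
        ≤ ((k ⊔ c') ⊓ (c' ⊔ y)) ⊓ c :=
          le_inf (le_inf (inf_le_left.trans le_sup_left) (inf_le_right.trans inf_le_left))
            (inf_le_right.trans inf_le_right)
      _ = ⊥ := by rw [hc'y, inf_comm, hc.inf_eq_bot]
  have hyc' : y ≤ c' := by
    have : (c' ⊔ c) ⊓ (c' ⊔ y) = c' ⊔ c ⊓ (c' ⊔ y) := sup_inf_assoc_of_le c le_sup_left
    rw [sup_comm, hc.sup_eq_top, top_inf_eq, inf_comm c, hz, sup_bot_eq] at this
    exact le_sup_right.trans this.le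
  rwa [inf_eq_right.mpr (hyc'.trans le_sup_right)] at hy

end Essential

section Projection

variable {α : Type*} [CompleteLattice α]

theorem proj_top_s15 (c c' : α) : proj c c' ⊤ = c := by
  simp [proj]

theorem proj_sup_compl (c c' a : α) : proj c c' (a ⊔ c') = proj c c' a := by
  simp only [proj, sup_assoc, sup_idem]

theorem proj_of_le [IsModularLattice α] {c c' a : α} (hc : IsCompl c c') (ha : a ≤ c) :
    proj c c' a = a := by
  rw [proj, sup_inf_assoc_of_le c' ha, hc.symm.inf_eq_bot, sup_bot_eq]

end Projection

section Rickart

variable {α : Type*} [CompleteLattice α] {M : Set (α → α)}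

theorem MRickart.mKExtending (hR : MRickart M) : MKExtending M := fun φ hφ =>
  ⟨linKer φ, hR φ hφ, essentialIn_self _⟩

theorem MRickart.mKNonsingular (hM : IsLinSubmonoid M) (hR : MRickart M) :
    MKNonsingular M := fun φ hφ hess =>
  have ⟨_, hy⟩ := hR φ hφ
  (hM.lin_mem φ hφ).eq_bot_of_linKer_eq_top (hess.eq_top_of_isCompl hy)

/-- If the kernel of `φ` is essential in a summand `c` with complement `c'`, then `φ ∘ π_c`
kills the essential element `ker φ ⊔ c'`; K-nonsingularity makes it zero, so `φ c = ⊥`. -/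
theorem MKNonsingular.linKer_eq_of_essentialIn [IsModularLattice α] (hM : IsLinSubmonoid M)
    (hproj : ContainsProjections M) (hN : MKNonsingular M) {φ : α → α} (hφ : φ ∈ M)
    {c c' : α} (hc : IsCompl c c') (hk : EssentialIn (linKer φ) c) : linKer φ = c := by
  have hψ_ker : (φ ∘ proj c c') (linKer φ ⊔ c') = ⊥ := by
    rw [Function.comp_apply, proj_sup_compl, proj_of_le hc hk.1, (hM.lin_mem φ hφ).map_linKer]
  have hψ : φ ∘ proj c c' = fun _ => ⊥ :=
    hN _ (hM.comp_mem φ hφ _ (hproj c c' hc))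
      ((hk.essential_sup_of_isCompl hc).mono (le_sSup hψ_ker))
  have hφc : φ c = ⊥ := by simpa only [Function.comp_apply, proj_top_s15] using congrFun hψ ⊤
  exact le_antisymm hk.1 (le_sSup hφc)

end Rickart

/-- If `M` contains all the projections, then `L` is `M`-Rickart iff `L` is
`M`-K-extending and `M`-K-nonsingular. -/
theorem stmt_15 {α : Type*} [CompleteLattice α] [IsModularLattice α]
    (M : Set (α → α)) (hM : IsLinSubmonoid M) (hproj : ContainsProjections M) :
    MRickart M ↔ MKExtending M ∧ MKNonsingular M := by
  refine ⟨fun hR => ⟨hR.mKExtending, hR.mKNonsingular hM⟩, fun ⟨hE, hN⟩ φ hφ => ?_⟩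
  obtain ⟨c, ⟨c', hc⟩, hk⟩ := hE φ hφ
  exact ⟨c', hN.linKer_eq_of_essentialIn hM hproj hφ hc hk ▸ hc⟩
end
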